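/- Let t ≥ 3 and let G be a dense, C_t^3-free 3-graph which is a good graph to a set A ⊆ V(G), with good pairs {a_1,b_1},…,{a_s,b_s} partitioning V(G)∖A, and suppose the induced subgraph G[A] contains K_{2t−2}^{3−}. Then for every pair of indices i ≠ j, N(a_i, a_j) ⊆ {b_i, b_j} and N(a_i, b_j) ⊆ {b_i, a_j}. -/
import Mathlib


open Finset

/-- An `r`-graph: a finite vertex set together with a finite set of edges,
each edge being a subset of the vertex set. (Uniformity is a separate predicate.) -/
structure HyperGraph where
  verts : Finset ℕ
  edges : Finset (Finset ℕ)
  edge_sub : ∀ e ∈ edges, e ⊆ verts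

namespace HyperGraph

/-- `G` is `r`-uniform: every edge has `r` vertices. -/
def IsUniform (G : HyperGraph) (r : ℕ) : Prop := ∀ e ∈ G.edges, e.card = r

def IsSubgraph (H G : HyperGraph) : Prop := H.verts ⊆ G.verts ∧ H.edges ⊆ G.edges

def IsProperSubgraph (H G : HyperGraph) : Prop := H.IsSubgraph G ∧ H ≠ G

/-- `G` contains a subgraph isomorphic to `F` (an injective copy of `F`). -/
def HasCopy (G F : HyperGraph) : Prop :=
  ∃ f : ℕ → ℕ, Set.InjOn f ↑F.verts ∧ (∀ v ∈ F.verts, f v ∈ G.verts) ∧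
    ∀ e ∈ F.edges, e.image f ∈ G.edges

/-- `G` is `F`-free: it contains no subgraph isomorphic to `F`. -/
def Free (G F : HyperGraph) : Prop := ¬ G.HasCopy F

/-- A feasible weight vector: nonnegative weights summing to 1 over the vertex set. -/
def IsWeighting (G : HyperGraph) (w : ℕ → ℝ) : Prop :=
  (∀ i, 0 ≤ w i) ∧ ∑ i ∈ G.verts, w i = 1

/-- The Lagrangian polynomial `λ(G, w) = Σ_{e ∈ E(G)} Π_{i ∈ e} w i`. -/
def lagrangianAt (G : HyperGraph) (w : ℕ → ℝ) : ℝ := ∑ e ∈ G.edges, ∏ i ∈ e, w i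

/-- The Lagrangian `λ(G)`: the maximum of `λ(G, w)` over feasible weight vectors. -/
noncomputable def lagrangian (G : HyperGraph) : ℝ :=
  sSup {x : ℝ | ∃ w : ℕ → ℝ, G.IsWeighting w ∧ x = G.lagrangianAt w}

/-- `G` is dense: every proper subgraph has strictly smaller Lagrangian. -/
def IsDense (G : HyperGraph) : Prop :=
  ∀ H : HyperGraph, H.IsProperSubgraph G → H.lagrangian < G.lagrangian

/-- The Lagrangian density `π_λ(F) = sup { r! · λ(G) : G an F-free r-graph }`. -/
noncomputable def lagrangianDensity (r : ℕ) (F : HyperGraph) : ℝ :=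
  sSup {x : ℝ | ∃ G : HyperGraph, G.IsUniform r ∧ G.Free F ∧
    x = (r.factorial : ℝ) * G.lagrangian}

/-- The subgraph of `G` induced by `A`. -/
def induce (G : HyperGraph) (A : Finset ℕ) : HyperGraph where
  verts := A
  edges := G.edges.filter (fun e => e ⊆ A)
  edge_sub := fun _ he => (Finset.mem_filter.mp he).2

/-- The link `N(a,b) = { c : {a,b,c} ∈ E(G) }`. -/
def link2 (G : HyperGraph) (a b : ℕ) : Set ℕ := {c | ({a, b, c} : Finset ℕ) ∈ G.edges}

/-- `{a, b}` is a good pair to `A`. -/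
def IsGoodPair (G : HyperGraph) (A : Finset ℕ) (a b : ℕ) : Prop :=
  a ≠ b ∧ a ∈ G.verts ∧ b ∈ G.verts ∧ a ∉ A ∧ b ∉ A ∧
    ∀ k ∈ A, G.link2 a k = {b} ∧ G.link2 b k = {a}

/-- The pairs `{a 1, b 1}, …, {a s, b s}` are good pairs to `A`
partitioning `V(G) ∖ A`. -/
def GoodPartition (G : HyperGraph) (A : Finset ℕ) (s : ℕ) (a b : ℕ → ℕ) : Prop :=
  A ⊆ G.verts ∧
  (∀ v, v ∈ G.verts \ A ↔ ∃ i ∈ Finset.Icc 1 s, v = a i ∨ v = b i) ∧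
  (∀ i ∈ Finset.Icc 1 s, ∀ j ∈ Finset.Icc 1 s, i ≠ j →
    ({a i, b i} : Finset ℕ) ∩ {a j, b j} = ∅) ∧
  (∀ i ∈ Finset.Icc 1 s, G.IsGoodPair A (a i) (b i))

/-- `G` is a good graph to `A`. -/
def IsGoodGraph (G : HyperGraph) (A : Finset ℕ) : Prop := ∃ s a b, G.GoodPartition A s a b

end HyperGraph

open HyperGraph

/-- The complete `r`-graph `K_t^r` on `t` vertices. -/
def completeHyperGraph (t r : ℕ) : HyperGraph where
  verts := Finset.Icc 1 t
  edges := (Finset.Icc 1 t).powersetCard r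
  edge_sub := fun _ he => (Finset.mem_powersetCard.mp he).1

/-- `K_t^{3-}`: the complete 3-graph on `t` vertices with one edge removed. -/
def completeMinus (t : ℕ) : HyperGraph where
  verts := Finset.Icc 1 t
  edges := ((Finset.Icc 1 t).powersetCard 3).filter (fun e => e ≠ ({1,2,3} : Finset ℕ))
  edge_sub := fun _ he => (Finset.mem_powersetCard.mp (Finset.mem_filter.mp he).1).1

/-- The generalized triangle `F_5 = {123, 124, 345}`. -/
def F5 : HyperGraph where
  verts := {1,2,3,4,5}
  edges := {{1,2,3},{1,2,4},{3,4,5}}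
  edge_sub := by decide

/-- The 3-uniform linear cycle of length 3: `C_3^3 = {123, 345, 561}`. -/
def C33 : HyperGraph where
  verts := {1,2,3,4,5,6}
  edges := {{1,2,3},{3,4,5},{5,6,1}}
  edge_sub := by decide

open scoped Classical in
/-- The 3-uniform linear cycle `C_t^3` of length `t`, with vertex set `[2t]` and
edges `{123, 345, …, (2t-3)(2t-2)(2t-1), (2t-1)(2t)1}`. -/
noncomputable def linearCycle (t : ℕ) : HyperGraph where
  verts := Finset.Icc 1 (2*t)
  edges := ((Finset.Icc 1 (2*t)).powersetCard 3).filter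
    (fun e => (∃ k < t - 1, e = ({2*k+1, 2*k+2, 2*k+3} : Finset ℕ)) ∨
      e = ({2*t-1, 2*t, 1} : Finset ℕ))
  edge_sub := fun _ he => (Finset.mem_powersetCard.mp (Finset.mem_filter.mp he).1).1

/-- The 3-graph `S_{2,t}` with vertex set `[t+2]` and edges `{12k : 3 ≤ k ≤ t+2}`. -/
def S2 (t : ℕ) : HyperGraph where
  verts := Finset.Icc 1 (t+2)
  edges := (Finset.Icc 3 (t+2)).image (fun k => ({1,2,k} : Finset ℕ))
  edge_sub := by
    intro e he
    simp only [Finset.mem_image] at he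
    obtain ⟨k, hk, rfl⟩ := he
    simp only [Finset.mem_Icc] at hk
    intro x hx
    simp only [Finset.mem_insert, Finset.mem_singleton] at hx
    simp only [Finset.mem_Icc]
    rcases hx with rfl | rfl | rfl <;> omega

/-- `F` is (up to relabeling) the disjoint union `G ⊔ H`. -/
def IsDisjointUnion (F G H : HyperGraph) : Prop :=
  ∃ f g : ℕ → ℕ, Set.InjOn f ↑G.verts ∧ Set.InjOn g ↑H.verts ∧
    Disjoint (G.verts.image f) (H.verts.image g) ∧
    F.verts = G.verts.image f ∪ H.verts.image g ∧
    F.edges = G.edges.image (fun e => e.image f) ∪ H.edges.image (fun e => e.image g)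

/-- An `r`-graph `H` on `t` vertices is perfect if `π_λ(H) = r! · λ(K_{t-1}^r)`. -/
def IsPerfect (r : ℕ) (H : HyperGraph) : Prop :=
  lagrangianDensity r H =
    (r.factorial : ℝ) * (completeHyperGraph (H.verts.card - 1) r).lagrangian

/-- The Turán number `ex(n, F)` for `r`-graphs on `n` vertices. -/
noncomputable def exNum (n r : ℕ) (F : HyperGraph) : ℕ :=
  sSup {m : ℕ | ∃ G : HyperGraph, G.IsUniform r ∧ G.verts.card = n ∧ G.Free F ∧
    m = G.edges.card}

/-- The defining property of an edge of `O_s`. -/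
def OsPred (s : ℕ) (e : Finset ℕ) : Prop :=
  ∃ i ∈ Finset.Icc 1 s, ∃ j ∈ Finset.Icc 1 s, i ≠ j ∧
    (e = ({2*i-1, 2*i, 2*j-1} : Finset ℕ) ∨ e = ({2*i-1, 2*i, 2*j} : Finset ℕ))

instance (s : ℕ) : DecidablePred (OsPred s) := fun e => by
  unfold OsPred; infer_instance

/-- The 3-graph `O_s` on vertices `a_i = 2i-1`, `b_i = 2i` (`1 ≤ i ≤ s`) with edges
`a_i b_i a_j` and `a_i b_i b_j` for `i ≠ j`. -/
def Os (s : ℕ) : HyperGraph where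
  verts := Finset.Icc 1 (2*s)
  edges := ((Finset.Icc 1 (2*s)).powersetCard 3).filter (OsPred s)
  edge_sub := fun _ he => (Finset.mem_powersetCard.mp (Finset.mem_filter.mp he).1).1

/-- `s = ⌈r^{r-1} / (2 (r-1)!)⌉`. -/
def sVal (r : ℕ) : ℕ := ⌈(r : ℚ)^(r-1) / (2 * ((r-1).factorial : ℚ))⌉₊

/-- The vertex `a_i`, realized as the natural number `r - 2 + i`. -/
def aVert (r i : ℕ) : ℕ := r - 2 + i

/-- The vertex `m_j`: a fresh vertex distinct from `1, …, r-2, a_1, a_2, a_3`. -/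
def mVert (r j : ℕ) : ℕ := r + 1 + j

/-- The edge `e_j = {1, 2, …, r-2, a_1, a_{j+1}}`. -/
def eEdge (r j : ℕ) : Finset ℕ := Finset.Icc 1 (r-2) ∪ {aVert r 1, aVert r (j+1)}

/-- The edge `{a_2, a_3, 1, …, i, m_1, …, m_{r-i-2}}` (for `i = 0` this is
`{a_2, a_3, m_1, …, m_{r-2}}`). -/
def thirdEdge (r i : ℕ) : Finset ℕ :=
  {aVert r 2, aVert r 3} ∪ Finset.Icc 1 i ∪ (Finset.Icc 1 (r - i - 2)).image (mVert r)

/-- The `r`-graph `F_i^r` with edges `e_1`, `e_2` and the third edge above. -/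
def Fgraph (r i : ℕ) : HyperGraph where
  verts := eEdge r 1 ∪ eEdge r 2 ∪ thirdEdge r i
  edges := {eEdge r 1, eEdge r 2, thirdEdge r i}
  edge_sub := by
    intro e he
    simp only [Finset.mem_insert, Finset.mem_singleton] at he
    rcases he with rfl | rfl | rfl
    · exact Finset.subset_union_left.trans Finset.subset_union_left
    · exact Finset.subset_union_right.trans Finset.subset_union_left
    · exact Finset.subset_union_right



section Aux

lemma triple_distinct {p q r : ℕ} (h : ({p, q, r} : Finset ℕ).card = 3) :
    p ≠ q ∧ p ≠ r ∧ q ≠ r := by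
  refine ⟨?_, ?_, ?_⟩ <;> rintro rfl
  · have hle : ({p, p, r} : Finset ℕ).card ≤ 2 := by
      refine le_trans (Finset.card_le_card (show ({p, p, r} : Finset ℕ) ⊆ {p, r} from by
        intro z hz; simp at hz ⊢; tauto)) ?_
      exact le_trans (Finset.card_insert_le _ _) (by simp)
    omega
  · have hle : ({p, q, p} : Finset ℕ).card ≤ 2 := by
      refine le_trans (Finset.card_le_card (show ({p, q, p} : Finset ℕ) ⊆ {p, q} from by
        intro z hz; simp at hz ⊢; tauto)) ?_
      exact le_trans (Finset.card_insert_le _ _) (by simp)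
    omega
  · have hle : ({p, q, q} : Finset ℕ).card ≤ 2 := by
      refine le_trans (Finset.card_le_card (show ({p, q, q} : Finset ℕ) ⊆ {p, q} from by
        intro z hz; simp at hz ⊢; tauto)) ?_
      exact le_trans (Finset.card_insert_le _ _) (by simp)
    omega

lemma triple_card {p q r : ℕ} (h1 : p ≠ q) (h2 : p ≠ r) (h3 : q ≠ r) :
    ({p, q, r} : Finset ℕ).card = 3 := by
  rw [Finset.card_insert_of_notMem (by simp [h1, h2]),
    Finset.card_insert_of_notMem (by simp [h3]), Finset.card_singleton]

lemma key_lemma (t : ℕ) (ht : 3 ≤ t) (G : HyperGraph) (h3 : G.IsUniform 3)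
    (hfree : G.Free (linearCycle t)) (A : Finset ℕ) (hAv : A ⊆ G.verts)
    (ai bi x y : ℕ)
    (haiA : ai ∉ A) (hbiA : bi ∉ A) (hxA : x ∉ A) (hyA : y ∉ A)
    (hab : ai ≠ bi) (hxy : x ≠ y) (hax : ai ≠ x) (hay : ai ≠ y)
    (hbx : bi ≠ x) (hby : bi ≠ y)
    (hLi : ∀ k ∈ A, G.link2 ai k = {bi})
    (hEi : ∀ k ∈ A, ({ai, bi, k} : Finset ℕ) ∈ G.edges)
    (hExy : ∀ k ∈ A, ({x, y, k} : Finset ℕ) ∈ G.edges)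
    (haiV : ai ∈ G.verts) (hbiV : bi ∈ G.verts) (hxV : x ∈ G.verts) (hyV : y ∈ G.verts)
    (f : ℕ → ℕ) (hfinj : Set.InjOn f ↑(Finset.Icc 1 (2*t-2)))
    (hfA : ∀ v ∈ Finset.Icc 1 (2*t-2), f v ∈ A)
    (hfE : ∀ k, 2 ≤ k → k ≤ t - 2 →
      ({f (2*k-1), f (2*k), f (2*k+1)} : Finset ℕ) ∈ G.edges)
    (c : ℕ) (hc : c ∈ G.link2 ai x) : c = bi ∨ c = y := by
  have hce : ({ai, x, c} : Finset ℕ) ∈ G.edges := hc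
  have hd := triple_distinct (h3 _ hce)
  obtain ⟨-, hac, hxc⟩ := hd
  by_contra hcon
  push_neg at hcon
  obtain ⟨hcb, hcy⟩ := hcon
  by_cases hcA : c ∈ A
  · have h1 : x ∈ G.link2 ai c := by
      show ({ai, c, x} : Finset ℕ) ∈ G.edges
      have he : ({ai, c, x} : Finset ℕ) = {ai, x, c} := by ext z; simp; tauto
      rw [he]; exact hce
    rw [hLi c hcA] at h1
    exact hbx (Set.mem_singleton_iff.mp h1).symm
  · apply hfree
    set g : ℕ → ℕ := fun v => if v = 1 then ai else if v = 2 then c else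
      if v = 3 then x else if v = 4 then y else if v = 2*t then bi else f (v-2) with hgdef
    have hg1 : g 1 = ai := by simp [hgdef]
    have hg2 : g 2 = c := by simp [hgdef]
    have hg3 : g 3 = x := by simp [hgdef]
    have hg4 : g 4 = y := by simp [hgdef]
    have hg2t : g (2*t) = bi := by
      simp only [hgdef]
      rw [if_neg (by omega), if_neg (by omega), if_neg (by omega), if_neg (by omega)]
      simp
    have hgm : ∀ v, 5 ≤ v → v ≤ 2*t - 1 → g v = f (v - 2) := by
      intro v h5 hle
      simp only [hgdef]
      rw [if_neg (by omega), if_neg (by omega), if_neg (by omega), if_neg (by omega),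
        if_neg (by omega)]
    have hcV : c ∈ G.verts := G.edge_sub _ hce (by simp)
    have hval : ∀ w, 1 ≤ w → w ≤ 2*t →
        (((w = 1 ∧ g w = ai) ∨ (w = 2 ∧ g w = c) ∨ (w = 3 ∧ g w = x) ∨
          (w = 4 ∧ g w = y) ∨ (w = 2*t ∧ g w = bi)) ∧ g w ∉ A ∧ g w ∈ G.verts)
        ∨ (5 ≤ w ∧ w ≤ 2*t - 1 ∧ g w = f (w - 2) ∧ g w ∈ A) := by
      intro w h1 h2
      rcases (show w = 1 ∨ w = 2 ∨ w = 3 ∨ w = 4 ∨ w = 2*t ∨ (5 ≤ w ∧ w ≤ 2*t - 1)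
        from by omega) with rfl | rfl | rfl | rfl | rfl | ⟨h5, hle⟩
      · exact Or.inl ⟨Or.inl ⟨rfl, hg1⟩, by rw [hg1]; exact haiA, by rw [hg1]; exact haiV⟩
      · exact Or.inl ⟨Or.inr (Or.inl ⟨rfl, hg2⟩), by rw [hg2]; exact hcA,
          by rw [hg2]; exact hcV⟩
      · exact Or.inl ⟨Or.inr (Or.inr (Or.inl ⟨rfl, hg3⟩)), by rw [hg3]; exact hxA,
          by rw [hg3]; exact hxV⟩
      · exact Or.inl ⟨Or.inr (Or.inr (Or.inr (Or.inl ⟨rfl, hg4⟩))), by rw [hg4]; exact hyA,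
          by rw [hg4]; exact hyV⟩
      · exact Or.inl ⟨Or.inr (Or.inr (Or.inr (Or.inr ⟨rfl, hg2t⟩))),
          by rw [hg2t]; exact hbiA, by rw [hg2t]; exact hbiV⟩
      · refine Or.inr ⟨h5, hle, hgm w h5 hle, ?_⟩
        rw [hgm w h5 hle]
        exact hfA _ (by simp only [Finset.mem_Icc]; omega)
    refine ⟨g, ?_, ?_, ?_⟩
    · intro u hu v hv huv
      simp only [linearCycle, Finset.coe_Icc, Set.mem_Icc] at hu hv
      rcases hval u hu.1 hu.2 with ⟨hus, huA, -⟩ | ⟨hu5, hu2t, hufe, huA⟩ <;>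
        rcases hval v hv.1 hv.2 with ⟨hvs, hvA, -⟩ | ⟨hv5, hv2t, hvfe, hvA⟩
      · rcases hus with ⟨hw, he⟩ | ⟨hw, he⟩ | ⟨hw, he⟩ | ⟨hw, he⟩ | ⟨hw, he⟩ <;>
          rcases hvs with ⟨hw', he'⟩ | ⟨hw', he'⟩ | ⟨hw', he'⟩ | ⟨hw', he'⟩ | ⟨hw', he'⟩ <;>
          rw [he, he'] at huv <;> omega
      · rw [huv] at huA; exact absurd hvA huA
      · rw [← huv] at hvA; exact absurd huA hvA
      · have h1 : (u - 2 : ℕ) ∈ (↑(Finset.Icc 1 (2*t-2)) : Set ℕ) := by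
          simp only [Finset.coe_Icc, Set.mem_Icc]; omega
        have h2 : (v - 2 : ℕ) ∈ (↑(Finset.Icc 1 (2*t-2)) : Set ℕ) := by
          simp only [Finset.coe_Icc, Set.mem_Icc]; omega
        have := hfinj h1 h2 (by rw [← hufe, ← hvfe]; exact huv)
        omega
    · intro v hv
      simp only [linearCycle, Finset.mem_Icc] at hv
      rcases hval v hv.1 hv.2 with ⟨-, -, hV⟩ | ⟨-, -, -, hA⟩
      · exact hV
      · exact hAv hA
    · intro e he
      have he2 := (Finset.mem_filter.mp he).2
      rcases he2 with ⟨k, hk, rfl⟩ | rfl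
      · rcases (show k = 0 ∨ k = 1 ∨ (2 ≤ k ∧ k ≤ t - 2) from by omega)
          with rfl | rfl | ⟨hk2, hkt⟩
        · have heq : ({2*0+1, 2*0+2, 2*0+3} : Finset ℕ) = {1, 2, 3} := by norm_num
          rw [heq]
          simp only [Finset.image_insert, Finset.image_singleton, hg1, hg2, hg3]
          have he' : ({ai, c, x} : Finset ℕ) = {ai, x, c} := by ext z; simp; tauto
          rw [he']; exact hce
        · have heq : ({2*1+1, 2*1+2, 2*1+3} : Finset ℕ) = {3, 4, 5} := by norm_num
          rw [heq]
          have hg5 : g 5 = f 3 := by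
            have := hgm 5 (by omega) (by omega); simpa using this
          simp only [Finset.image_insert, Finset.image_singleton, hg3, hg4, hg5]
          exact hExy _ (hfA 3 (by simp only [Finset.mem_Icc]; omega))
        · have e1 : g (2*k+1) = f (2*k-1) := by
            rw [hgm (2*k+1) (by omega) (by omega), show 2*k+1-2 = 2*k-1 from by omega]
          have e2 : g (2*k+2) = f (2*k) := by
            rw [hgm (2*k+2) (by omega) (by omega), show 2*k+2-2 = 2*k from by omega]
          have e3 : g (2*k+3) = f (2*k+1) := by
            rw [hgm (2*k+3) (by omega) (by omega), show 2*k+3-2 = 2*k+1 from by omega]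
          simp only [Finset.image_insert, Finset.image_singleton, e1, e2, e3]
          exact hfE k hk2 hkt
      · have e1 : g (2*t-1) = f (2*t-3) := by
          rw [hgm (2*t-1) (by omega) (by omega), show 2*t-1-2 = 2*t-3 from by omega]
        simp only [Finset.image_insert, Finset.image_singleton, e1, hg2t, hg1]
        have he' : ({f (2*t-3), bi, ai} : Finset ℕ) = {ai, bi, f (2*t-3)} := by
          ext z; simp; tauto
        rw [he']
        exact hEi _ (hfA _ (by simp only [Finset.mem_Icc]; omega))

end Aux

/-- let `t ≥ 3` and let `G` be a dense `C_t^3`-free 3-graph which is a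
good graph to `A` with good pairs `{a i, b i}` partitioning `V(G) ∖ A`, and suppose
`G[A]` contains `K_{2t-2}^{3-}`.  Then for `i ≠ j`, `N(a_i, a_j) ⊆ {b_i, b_j}` and
`N(a_i, b_j) ⊆ {b_i, a_j}`. -/
theorem good_pair_links (t : ℕ) (ht : 3 ≤ t) (G : HyperGraph)
    (h3 : G.IsUniform 3) (hd : G.IsDense) (hfree : G.Free (linearCycle t))
    (A : Finset ℕ) (s : ℕ) (a b : ℕ → ℕ) (hpart : G.GoodPartition A s a b)
    (hKm : (G.induce A).HasCopy (completeMinus (2 * t - 2)))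
    (i j : ℕ) (hi : i ∈ Finset.Icc 1 s) (hj : j ∈ Finset.Icc 1 s) (hij : i ≠ j) :
    G.link2 (a i) (a j) ⊆ ({b i, b j} : Set ℕ) ∧
      G.link2 (a i) (b j) ⊆ ({b i, a j} : Set ℕ) := by
  obtain ⟨hAv, hcover, hdisj, hgood⟩ := hpart
  obtain ⟨haibi, haiV, hbiV, haiA, hbiA, hLki⟩ := hgood i hi
  obtain ⟨hajbj, hajV, hbjV, hajA, hbjA, hLkj⟩ := hgood j hj
  have hdj := hdisj i hi j hj hij
  have hne1 : a i ≠ a j := by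
    intro h
    have hmem : a i ∈ ({a i, b i} : Finset ℕ) ∩ {a j, b j} :=
      Finset.mem_inter.mpr ⟨by simp, by simp [h]⟩
    rw [hdj] at hmem; exact absurd hmem (Finset.notMem_empty _)
  have hne2 : a i ≠ b j := by
    intro h
    have hmem : a i ∈ ({a i, b i} : Finset ℕ) ∩ {a j, b j} :=
      Finset.mem_inter.mpr ⟨by simp, by simp [h]⟩
    rw [hdj] at hmem; exact absurd hmem (Finset.notMem_empty _)
  have hne3 : b i ≠ a j := by
    intro h
    have hmem : b i ∈ ({a i, b i} : Finset ℕ) ∩ {a j, b j} :=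
      Finset.mem_inter.mpr ⟨by simp, by simp [h]⟩
    rw [hdj] at hmem; exact absurd hmem (Finset.notMem_empty _)
  have hne4 : b i ≠ b j := by
    intro h
    have hmem : b i ∈ ({a i, b i} : Finset ℕ) ∩ {a j, b j} :=
      Finset.mem_inter.mpr ⟨by simp, by simp [h]⟩
    rw [hdj] at hmem; exact absurd hmem (Finset.notMem_empty _)
  -- edges from good pairs
  have hEi : ∀ k ∈ A, ({a i, b i, k} : Finset ℕ) ∈ G.edges := by
    intro k hk
    have h1 : b i ∈ G.link2 (a i) k := by rw [(hLki k hk).1]; rfl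
    have h2 : ({a i, k, b i} : Finset ℕ) ∈ G.edges := h1
    have he' : ({a i, b i, k} : Finset ℕ) = {a i, k, b i} := by ext z; simp; tauto
    rw [he']; exact h2
  have hEaj : ∀ k ∈ A, ({a j, b j, k} : Finset ℕ) ∈ G.edges := by
    intro k hk
    have h1 : b j ∈ G.link2 (a j) k := by rw [(hLkj k hk).1]; rfl
    have h2 : ({a j, k, b j} : Finset ℕ) ∈ G.edges := h1
    have he' : ({a j, b j, k} : Finset ℕ) = {a j, k, b j} := by ext z; simp; tauto
    rw [he']; exact h2
  have hEbj : ∀ k ∈ A, ({b j, a j, k} : Finset ℕ) ∈ G.edges := by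
    intro k hk
    have h1 : a j ∈ G.link2 (b j) k := by rw [(hLkj k hk).2]; rfl
    have h2 : ({b j, k, a j} : Finset ℕ) ∈ G.edges := h1
    have he' : ({b j, a j, k} : Finset ℕ) = {b j, k, a j} := by ext z; simp; tauto
    rw [he']; exact h2
  have hLi : ∀ k ∈ A, G.link2 (a i) k = {b i} := fun k hk => (hLki k hk).1
  -- the K^{3-} copy
  obtain ⟨f, hfinj, hfv, hfe⟩ := hKm
  have hfA : ∀ v ∈ Finset.Icc 1 (2*t-2), f v ∈ A := fun v hv => hfv v hv
  have hfE : ∀ k, 2 ≤ k → k ≤ t - 2 →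
      ({f (2*k-1), f (2*k), f (2*k+1)} : Finset ℕ) ∈ G.edges := by
    intro k h2 hkt
    have hedge : ({2*k-1, 2*k, 2*k+1} : Finset ℕ) ∈ (completeMinus (2*t-2)).edges := by
      simp only [completeMinus, Finset.mem_filter, Finset.mem_powersetCard]
      refine ⟨⟨?_, triple_card (by omega) (by omega) (by omega)⟩, ?_⟩
      · intro z hz
        simp only [Finset.mem_insert, Finset.mem_singleton] at hz
        simp only [Finset.mem_Icc]
        rcases hz with rfl | rfl | rfl <;> omega
      · intro hEq
        have hm : (2*k+1 : ℕ) ∈ ({1, 2, 3} : Finset ℕ) := hEq ▸ (by simp)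
        simp only [Finset.mem_insert, Finset.mem_singleton] at hm
        omega
    have := hfe _ hedge
    simp only [Finset.image_insert, Finset.image_singleton] at this
    exact (Finset.mem_filter.mp this).1
  have hfinj' : Set.InjOn f ↑(Finset.Icc 1 (2*t-2)) := hfinj
  constructor
  · intro c hc
    rcases key_lemma t ht G h3 hfree A hAv (a i) (b i) (a j) (b j)
      haiA hbiA hajA hbjA haibi hajbj hne1 hne2 hne3 hne4
      hLi hEi hEaj haiV hbiV hajV hbjV f hfinj' hfA hfE c hc with h | h
    · exact Or.inl h
    · exact Or.inr h
  · intro c hc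
    rcases key_lemma t ht G h3 hfree A hAv (a i) (b i) (b j) (a j)
      haiA hbiA hbjA hajA haibi (Ne.symm hajbj) hne2 hne1 hne4 hne3
      hLi hEi hEbj haiV hbiV hbjV hajV f hfinj' hfA hfE c hc with h | h
    · exact Or.inl h
    · exact Or.inr h
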